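/- arXiv:1411.6581 — 9 statements merged into one kernel-verified Lean document; each statement's English description precedes it below -/
import Mathlib

section
/- Let π be a Baxter permutation on {1,...,n} with n ≥ 2. Let x be the index of the minimum and y the index of the maximum of π, and suppose x, y ∈ [2, n-1] with x < y. Define f(i) for i ∈ [x,y] to be 0 if π(i) < min(π(1), π(n)) and 1 if π(i) > max(π(1), π(n)); assume f is totally defined on [x,y] (i.e., for every i ∈ [x,y], π(i) is either below both π(1), π(n) or above both). Then π(1) < π(n). -/
def IsBaxter {n : ℕ} (π : Equiv.Perm (Fin n)) : Prop :=
  ∀ (i j k : Fin n) (_ : i < j) (hjk : (j : ℕ) + 1 ≤ (k : ℕ)),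
    ¬ ((π ⟨(j : ℕ) + 1, lt_of_le_of_lt hjk k.isLt⟩ < π i ∧ π i < π k ∧ π k < π j) ∨
       (π j < π k ∧ π k < π i ∧ π i < π ⟨(j : ℕ) + 1, lt_of_le_of_lt hjk k.isLt⟩))

lemma flip_aux (g : ℕ → Prop) [DecidablePred g] :
    ∀ y x, x ≤ y → g x → ¬ g y → ∃ i, x ≤ i ∧ i < y ∧ g i ∧ ¬ g (i + 1) := by
  intro y
  induction y with
  | zero =>
    intro x hx hgx hgy
    exact absurd (by simpa [Nat.le_zero.mp hx] using hgx) hgy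
  | succ y ih =>
    intro x hx hgx hgy
    have hxy : x ≤ y := by
      rcases Nat.lt_or_ge x (y + 1) with h | h
      · omega
      · exact absurd ((Nat.le_antisymm hx h) ▸ hgx) hgy
    by_cases h : g y
    · exact ⟨y, hxy, Nat.lt_succ_self y, h, hgy⟩
    · obtain ⟨i, h1, h2, h3, h4⟩ := ih x hxy hgx h
      exact ⟨i, h1, Nat.lt_succ_of_lt h2, h3, h4⟩

/-- Let `π` be a Baxter permutation on at least 2 elements, `x` the position of the
minimum and `y` the position of the maximum, both interior, with `x < y`.  If every
position in `[x,y]` holds a value either below both endpoint values or above both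
endpoint values, then the first value is smaller than the last value. -/
theorem baxter_endpoints_comparison {m : ℕ} (π : Equiv.Perm (Fin (m + 2)))
    (hB : IsBaxter π) (x y : Fin (m + 2))
    (hxmin : ∀ i, π x ≤ π i) (hymax : ∀ i, π i ≤ π y)
    (hx1 : 0 < x) (hx2 : x < Fin.last (m + 1))
    (hy1 : 0 < y) (hy2 : y < Fin.last (m + 1))
    (hxy : x < y)
    (hf : ∀ i, x ≤ i → i ≤ y →
      (π i < π 0 ∧ π i < π (Fin.last (m + 1))) ∨
      (π 0 < π i ∧ π (Fin.last (m + 1)) < π i)) :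
    π 0 < π (Fin.last (m + 1)) := by
  by_contra hcon
  push_neg at hcon
  have hne : π (Fin.last (m + 1)) ≠ π 0 := by
    intro h
    have := π.injective h
    exact absurd this.symm (Fin.ne_of_lt (lt_trans hx1 hx2))
  have hlast0 : π (Fin.last (m + 1)) < π 0 := lt_of_le_of_ne hcon hne
  -- natural-number indexed predicate
  set g : ℕ → Prop := fun k => π ⟨k % (m + 2), Nat.mod_lt _ (by omega)⟩ < π 0 with hg
  have hxm : (x : ℕ) % (m + 2) = (x : ℕ) := Nat.mod_eq_of_lt x.isLt
  have hym : (y : ℕ) % (m + 2) = (y : ℕ) := Nat.mod_eq_of_lt y.isLt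
  have hgx : g (x : ℕ) := by
    show π ⟨(x : ℕ) % (m + 2), _⟩ < π 0
    have : (⟨(x : ℕ) % (m + 2), Nat.mod_lt _ (by omega)⟩ : Fin (m + 2)) = x := by
      ext; exact hxm
    rw [this]
    exact lt_of_le_of_ne (hxmin 0) fun h => Fin.ne_of_lt hx1 (π.injective h).symm
  have hgy : ¬ g (y : ℕ) := by
    show ¬ π ⟨(y : ℕ) % (m + 2), _⟩ < π 0
    have : (⟨(y : ℕ) % (m + 2), Nat.mod_lt _ (by omega)⟩ : Fin (m + 2)) = y := by
      ext; exact hym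
    rw [this]
    exact not_lt.mpr (hymax 0)
  obtain ⟨i, hxi, hiy, hgi, hgi1⟩ := flip_aux g (y : ℕ) (x : ℕ) (Fin.le_of_lt hxy) hgx hgy
  have hi2 : i < m + 2 := lt_trans hiy y.isLt
  have hi1lt : i + 1 < m + 2 := by
    have : (y : ℕ) < m + 1 := hy2
    omega
  set j : Fin (m + 2) := ⟨i, hi2⟩ with hj
  set j1 : Fin (m + 2) := ⟨i + 1, hi1lt⟩ with hj1
  have hgi' : π j < π 0 := by
    have : (⟨i % (m + 2), Nat.mod_lt _ (by omega)⟩ : Fin (m + 2)) = j := by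
      ext; exact Nat.mod_eq_of_lt hi2
    simpa [hg, this] using hgi
  have hgi1' : ¬ π j1 < π 0 := by
    have : (⟨(i + 1) % (m + 2), Nat.mod_lt _ (by omega)⟩ : Fin (m + 2)) = j1 := by
      ext; exact Nat.mod_eq_of_lt hi1lt
    simpa [hg, this] using hgi1
  have hjx : x ≤ j := hxi
  have hjy : j ≤ y := le_of_lt hiy
  have hj1x : x ≤ j1 := by
    have : (x : ℕ) ≤ i + 1 := le_trans hxi (Nat.le_succ i)
    exact this
  have hj1y : j1 ≤ y := by
    show i + 1 ≤ (y : ℕ)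
    omega
  have hfj := hf j hjx hjy
  have hfj1 := hf j1 hj1x hj1y
  have hjlow : π j < π (Fin.last (m + 1)) := by
    rcases hfj with ⟨_, h⟩ | ⟨h, _⟩
    · exact h
    · exact absurd hgi' (not_lt.mpr (le_of_lt h))
  have hj1high : π 0 < π j1 := by
    rcases hfj1 with ⟨h, _⟩ | ⟨h, _⟩
    · exact absurd h hgi1'
    · exact h
  have h0j : (0 : Fin (m + 2)) < j := lt_of_lt_of_le hx1 hjx
  have hjk : (j : ℕ) + 1 ≤ ((Fin.last (m + 1) : Fin (m + 2)) : ℕ) := by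
    show i + 1 ≤ m + 1
    omega
  have := hB 0 j (Fin.last (m + 1)) h0j hjk
  apply this
  right
  refine ⟨hjlow, hlast0, ?_⟩
  convert hj1high using 2
end

section
/- Two arrays of distinct values have the same answers to all range minimum and range maximum queries on all subranges if and only if they have the same answers to all pairwise comparison queries, provided both arrays realize Baxter permutations. Formally: if π and σ are Baxter permutations on {1,...,n} such that for every range [i,j] ⊆ [1,n] the argmin and argmax of π on [i,j] equal the argmin and argmax of σ on [i,j], then π = σ. -/
/-- Discrete intermediate value: a predicate that holds at `p` and fails at `q ≥ p`
must switch at some adjacent pair. -/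
lemma exists_switch {f : ℕ → Prop} : ∀ {p q : ℕ}, p ≤ q → f p → ¬ f q →
    ∃ b, p ≤ b ∧ b < q ∧ f b ∧ ¬ f (b + 1) := by
  intro p q
  induction q with
  | zero =>
    intro hpq hp hq
    have : p = 0 := Nat.le_zero.mp hpq
    subst this; exact absurd hp hq
  | succ q ih =>
    intro hpq hp hq
    have hpq' : p ≤ q := by
      rcases Nat.lt_succ_iff_lt_or_eq.mp (Nat.lt_succ_of_le hpq) with h | h
      · omega
      · subst h; exact absurd hp hq
    by_cases hfq : f q
    · exact ⟨q, hpq', Nat.lt_succ_self q, hfq, hq⟩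
    · obtain ⟨b, h1, h2, h3, h4⟩ := ih hpq' hp hfq
      exact ⟨b, h1, Nat.lt_succ_of_lt h2, h3, h4⟩

/-- Core contradiction lemma: a minimal comparison disagreement between two Baxter
permutations with the same range-min/max answers is impossible. -/
lemma baxter_core {n : ℕ} (π σ : Equiv.Perm (Fin n)) (hπ : IsBaxter π) (hσ : IsBaxter σ)
    (hmin : ∀ i j ℓ : Fin n, i ≤ j → i ≤ ℓ → ℓ ≤ j →
      ((∀ m : Fin n, i ≤ m → m ≤ j → π ℓ ≤ π m) ↔ (∀ m : Fin n, i ≤ m → m ≤ j → σ ℓ ≤ σ m)))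
    (hmax : ∀ i j ℓ : Fin n, i ≤ j → i ≤ ℓ → ℓ ≤ j →
      ((∀ m : Fin n, i ≤ m → m ≤ j → π m ≤ π ℓ) ↔ (∀ m : Fin n, i ≤ m → m ≤ j → σ m ≤ σ ℓ)))
    (i j : Fin n) (hij : i < j)
    (IH : ∀ a b : Fin n, a < b → (b : ℕ) - (a : ℕ) < (j : ℕ) - (i : ℕ) →
      (π a < π b ↔ σ a < σ b))
    (h1 : π i < π j) (h2 : σ j < σ i) : False := by
  have hijn : (i : ℕ) < (j : ℕ) := hij
  have hije : i ≤ j := le_of_lt hij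
  -- argmin m
  obtain ⟨m, hmmem, hmmin⟩ := Finset.exists_min_image (Finset.Icc i j) π
    ⟨i, Finset.mem_Icc.mpr ⟨le_refl i, hije⟩⟩
  obtain ⟨hm1, hm2⟩ := Finset.mem_Icc.mp hmmem
  have hπm : ∀ x : Fin n, i ≤ x → x ≤ j → π m ≤ π x := fun x hx1 hx2 =>
    hmmin x (Finset.mem_Icc.mpr ⟨hx1, hx2⟩)
  have hσm : ∀ x : Fin n, i ≤ x → x ≤ j → σ m ≤ σ x :=
    (hmin i j m hije hm1 hm2).mp hπm
  -- argmax M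
  obtain ⟨M, hMmem, hMmax⟩ := Finset.exists_max_image (Finset.Icc i j) π
    ⟨i, Finset.mem_Icc.mpr ⟨le_refl i, hije⟩⟩
  obtain ⟨hM1, hM2⟩ := Finset.mem_Icc.mp hMmem
  have hπM : ∀ x : Fin n, i ≤ x → x ≤ j → π x ≤ π M := fun x hx1 hx2 =>
    hMmax x (Finset.mem_Icc.mpr ⟨hx1, hx2⟩)
  have hσM : ∀ x : Fin n, i ≤ x → x ≤ j → σ x ≤ σ M :=
    (hmax i j M hije hM1 hM2).mp hπM
  -- m is interior
  have hmne_i : m ≠ i := by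
    intro h; subst h
    exact absurd (hσm j hije (le_refl j)) (not_le.mpr h2)
  have hmne_j : m ≠ j := by
    intro h; subst h
    exact absurd (hπm i (le_refl i) hije) (not_le.mpr h1)
  have him : i < m := lt_of_le_of_ne hm1 (Ne.symm hmne_i)
  have hmj : m < j := lt_of_le_of_ne hm2 hmne_j
  -- M is interior
  have hMne_i : M ≠ i := by
    intro h; subst h
    exact absurd (hπM j hije (le_refl j)) (not_le.mpr h1)
  have hMne_j : M ≠ j := by
    intro h; subst h
    exact absurd (hσM i (le_refl i) hije) (not_le.mpr h2)
  have hiM : i < M := lt_of_le_of_ne hM1 (Ne.symm hMne_i)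
  have hMj : M < j := lt_of_le_of_ne hM2 hMne_j
  -- strict bounds
  have hLm : π m < π i :=
    lt_of_le_of_ne (hπm i (le_refl i) hije) (fun h => hmne_i (π.injective h))
  have hHM : π j < π M :=
    lt_of_le_of_ne (hπM j hije (le_refl j)) (fun h => hMne_j (π.injective h.symm))
  -- no interior element has value strictly between π i and π j
  have noMid : ∀ ℓ : Fin n, i < ℓ → ℓ < j → π ℓ < π i ∨ π j < π ℓ := by
    intro ℓ hiℓ hℓj
    by_contra hcon
    push_neg at hcon
    obtain ⟨hc1, hc2⟩ := hcon
    have hiℓn : (i : ℕ) < (ℓ : ℕ) := hiℓ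
    have hℓjn : (ℓ : ℕ) < (j : ℕ) := hℓj
    have hπiℓ : π i < π ℓ := lt_of_le_of_ne hc1 (fun h => (ne_of_lt hiℓ) (π.injective h))
    have hπℓj : π ℓ < π j := lt_of_le_of_ne hc2 (fun h => (ne_of_lt hℓj) (π.injective h))
    have hσiℓ : σ i < σ ℓ := (IH i ℓ hiℓ (by omega)).mp hπiℓ
    have hσℓj : σ ℓ < σ j := (IH ℓ j hℓj (by omega)).mp hπℓj
    exact absurd (lt_trans hσiℓ hσℓj) (not_lt.mpr (le_of_lt h2))
  have himn : (i : ℕ) < (m : ℕ) := him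
  have hmjn : (m : ℕ) < (j : ℕ) := hmj
  have hiMn : (i : ℕ) < (M : ℕ) := hiM
  have hMjn : (M : ℕ) < (j : ℕ) := hMj
  have hjn : (j : ℕ) < n := j.isLt
  rcases lt_trichotomy (m : ℕ) (M : ℕ) with hcase | hcase | hcase
  · -- m < M : find switch from "low" to "high", get 3-14-2 in σ
    have hfm : ∃ h : (m : ℕ) < n, π ⟨(m : ℕ), h⟩ < π i := ⟨m.isLt, by simpa using hLm⟩
    have hfM : ¬ ∃ h : (M : ℕ) < n, π ⟨(M : ℕ), h⟩ < π i := by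
      rintro ⟨h, hlt⟩
      simp only [Fin.eta] at hlt
      exact absurd (lt_trans h1 hHM) (not_lt.mpr (le_of_lt hlt))
    obtain ⟨b, hb1, hb2, ⟨hbn, hbL⟩, hbH⟩ :=
      exists_switch (f := fun t => ∃ h : t < n, π ⟨t, h⟩ < π i) (le_of_lt hcase) hfm hfM
    have hbn' : b < n := hbn
    have hb1n : b + 1 < n := by omega
    have hbH' : π j < π ⟨b + 1, hb1n⟩ := by
      rcases noMid ⟨b + 1, hb1n⟩ (by exact (show (i:ℕ) < b + 1 by omega)) (by exact (show (b:ℕ)+1 < (j:ℕ) by omega)) with h | h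
      · exact absurd ⟨hb1n, h⟩ hbH
      · exact h
    -- Baxter for σ at (i, b, j)
    have hib : i < (⟨b, hbn'⟩ : Fin n) := show (i : ℕ) < b by omega
    have hbj : ((⟨b, hbn'⟩ : Fin n) : ℕ) + 1 ≤ (j : ℕ) := by simp; omega
    have hσ1 : σ ⟨b, hbn'⟩ < σ j :=
      (IH ⟨b, hbn'⟩ j (show b < (j : ℕ) by omega) (by simp; omega)).mp (lt_trans hbL h1)
    have hσ2 : σ i < σ ⟨b + 1, hb1n⟩ :=
      (IH i ⟨b + 1, hb1n⟩ (show (i : ℕ) < b + 1 by omega) (by simp; omega)).mp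
        (lt_trans h1 hbH')
    exact hσ i ⟨b, hbn'⟩ j hib hbj (Or.inr ⟨hσ1, h2, hσ2⟩)
  · -- m = M impossible
    have : m = M := Fin.ext hcase
    subst this
    exact absurd (lt_trans (lt_trans hLm h1) hHM) (lt_irrefl _)
  · -- M < m : find switch from "high" to "low", get 2-41-3 in π
    have hfM : ∃ h : (M : ℕ) < n, π j < π ⟨(M : ℕ), h⟩ := ⟨M.isLt, by simpa using hHM⟩
    have hfm : ¬ ∃ h : (m : ℕ) < n, π j < π ⟨(m : ℕ), h⟩ := by
      rintro ⟨h, hlt⟩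
      simp only [Fin.eta] at hlt
      exact absurd (lt_trans hLm h1) (not_lt.mpr (le_of_lt hlt))
    obtain ⟨b, hb1, hb2, ⟨hbn, hbHv⟩, hbL⟩ :=
      exists_switch (f := fun t => ∃ h : t < n, π j < π ⟨t, h⟩) (le_of_lt hcase) hfM hfm
    have hbn' : b < n := hbn
    have hb1n : b + 1 < n := by omega
    have hbL' : π ⟨b + 1, hb1n⟩ < π i := by
      rcases noMid ⟨b + 1, hb1n⟩ (show (i:ℕ) < b + 1 by omega) (show (b:ℕ)+1 < (j:ℕ) by omega) with h | h
      · exact h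
      · exact absurd ⟨hb1n, h⟩ hbL
    have hib : i < (⟨b, hbn'⟩ : Fin n) := show (i : ℕ) < b by omega
    have hbj : ((⟨b, hbn'⟩ : Fin n) : ℕ) + 1 ≤ (j : ℕ) := by simp; omega
    exact hπ i ⟨b, hbn'⟩ j hib hbj (Or.inl ⟨hbL', h1, hbHv⟩)

/-- Two Baxter permutations with the same answers to all range minimum and range maximum
queries (on every range `[i,j]`) are equal. -/
theorem baxter_determined_by_range_min_max {n : ℕ} (π σ : Equiv.Perm (Fin n))
    (hπ : IsBaxter π) (hσ : IsBaxter σ)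
    (hmin : ∀ i j ℓ : Fin n, i ≤ j → i ≤ ℓ → ℓ ≤ j →
      ((∀ m : Fin n, i ≤ m → m ≤ j → π ℓ ≤ π m) ↔ (∀ m : Fin n, i ≤ m → m ≤ j → σ ℓ ≤ σ m)))
    (hmax : ∀ i j ℓ : Fin n, i ≤ j → i ≤ ℓ → ℓ ≤ j →
      ((∀ m : Fin n, i ≤ m → m ≤ j → π m ≤ π ℓ) ↔ (∀ m : Fin n, i ≤ m → m ≤ j → σ m ≤ σ ℓ))) :
    π = σ := by
  have key : ∀ d : ℕ, ∀ i j : Fin n, i < j → (j : ℕ) - (i : ℕ) ≤ d →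
      (π i < π j ↔ σ i < σ j) := by
    intro d
    induction d with
    | zero =>
      intro i j hij hd
      have : (i : ℕ) < (j : ℕ) := hij
      omega
    | succ d ih =>
      intro i j hij hd
      have IH : ∀ a b : Fin n, a < b → (b : ℕ) - (a : ℕ) < (j : ℕ) - (i : ℕ) →
          (π a < π b ↔ σ a < σ b) := by
        intro a b hab hd'
        exact ih a b hab (by omega)
      constructor
      · intro h
        by_contra h'
        have hne : σ i ≠ σ j := fun he => (ne_of_lt hij) (σ.injective he)
        have h2 : σ j < σ i := lt_of_le_of_ne (not_lt.mp h') (Ne.symm hne)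
        exact baxter_core π σ hπ hσ hmin hmax i j hij IH h h2
      · intro h
        by_contra h'
        have hne : π i ≠ π j := fun he => (ne_of_lt hij) (π.injective he)
        have h2 : π j < π i := lt_of_le_of_ne (not_lt.mp h') (Ne.symm hne)
        exact baxter_core σ π hσ hπ
          (fun a b c ha hb hc => (hmin a b c ha hb hc).symm)
          (fun a b c ha hb hc => (hmax a b c ha hb hc).symm)
          i j hij (fun a b hab hd' => (IH a b hab hd').symm) h h2
  have comp : ∀ a b : Fin n, a < b → (π a < π b ↔ σ a < σ b) := fun a b hab =>
    key ((b : ℕ) - (a : ℕ)) a b hab (le_refl _)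
  -- σ ∘ π.symm is strictly monotone
  have hsm : StrictMono (fun x => σ (π.symm x)) := by
    intro x y hxy
    rcases lt_trichotomy (π.symm x) (π.symm y) with h | h | h
    · exact (comp _ _ h).mp (by simpa using hxy)
    · exact absurd (show x = y by simpa using congrArg π h) (ne_of_lt hxy)
    · have hnot : ¬ σ (π.symm y) < σ (π.symm x) := by
        intro hc
        have : π (π.symm y) < π (π.symm x) := (comp _ _ h).mpr hc
        simp only [Equiv.apply_symm_apply] at this
        exact absurd this (not_lt.mpr (le_of_lt hxy))
      have hne : σ (π.symm x) ≠ σ (π.symm y) := by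
        intro he
        have : π.symm x = π.symm y := σ.injective he
        exact absurd (show x = y by simpa using congrArg π this) (ne_of_lt hxy)
      exact lt_of_le_of_ne (not_lt.mp hnot) hne
  have hrange : Set.range (fun x => σ (π.symm x)) = Set.range (id : Fin n → Fin n) := by
    apply Set.eq_of_subset_of_subset
    · intro x _; exact ⟨x, rfl⟩
    · intro x _
      exact ⟨π (σ.symm x), by simp⟩
  have hfeq : (fun x => σ (π.symm x)) = (id : Fin n → Fin n) :=
    (@StrictMono.range_inj (Fin n) (Fin n) _ _ (inferInstance : WellFoundedLT (Fin n))
      _ id hsm strictMono_id).1 hrange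
  ext a
  have := congrFun hfeq (π a)
  simp only [Equiv.symm_apply_apply, id] at this
  exact congrArg Fin.val this.symm
end

section
/- The number of ordered partitions of N into g parts, where every part is an integer from [0,B], is at least C(N - 2g' + g - 1, g - g' - 1), where g' = ⌊N/B⌋, assuming g - g' - 1 ≥ 0 and N - 2g' ≥ 0. -/
/-!
Read an ordered partition of `N` into `g` parts as the monotone map sending each of the `N`
units to the index of its part: the parts are the fibre sizes, and they determine the monotone
map. Put `k = g - ⌊N / B⌋`. Sorting a multiset in `Sym (Fin k) N` gives a monotone
`h : Fin N → Fin k`, and `u ↦ h u + ⌊u / B⌋` is again monotone, now into `Fin g`, with every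
fibre inside a single block `{u | ⌊u / B⌋ = q}`, hence of size at most `B`. So the partitions
with parts in `[0, B]` number at least `|Sym (Fin k) N| = C(N + k - 1, k - 1)`, which dominates
the binomial coefficient of the theorem.
-/

open Finset

namespace Sym

variable {α : Type*} [LinearOrder α] {n : ℕ}

def sortedFn (s : Sym α n) (u : Fin n) : α :=
  (s.1.sort)[u.1]'(by simp)

theorem ofFn_sortedFn (s : Sym α n) : List.ofFn s.sortedFn = s.1.sort := by
  apply List.ext_getElem (by simp)
  intro i _ _
  simp [sortedFn]

theorem monotone_sortedFn (s : Sym α n) : Monotone s.sortedFn := by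
  rw [← List.sortedLE_ofFn_iff, ofFn_sortedFn]
  exact (Multiset.pairwise_sort _ _).sortedLE

theorem sortedFn_injective : Function.Injective (sortedFn : Sym α n → Fin n → α) := by
  intro s t h
  apply Subtype.ext
  rw [← Multiset.sort_eq s.1 (· ≤ ·), ← Multiset.sort_eq t.1 (· ≤ ·), ← ofFn_sortedFn,
    ← ofFn_sortedFn, h]

end Sym

theorem Monotone.eq_of_coe_ofFn_eq {α : Type*} [LinearOrder α] {n : ℕ} {f f' : Fin n → α}
    (hf : Monotone f) (hf' : Monotone f') (h : (List.ofFn f : Multiset α) = List.ofFn f') :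
    f = f' :=
  List.ofFn_injective <| (Quotient.exact h).eq_of_sortedLE (List.sortedLE_ofFn_iff.2 hf)
    (List.sortedLE_ofFn_iff.2 hf')

theorem Fin.count_coe_ofFn {α : Type*} [DecidableEq α] {n : ℕ} (f : Fin n → α) (a : α) :
    (List.ofFn f : Multiset α).count a = #{u | f u = a} := by
  rw [← Fin.univ_val_map, Multiset.count_map, Finset.card_def, Finset.filter_val]
  simp [eq_comm]

theorem Monotone.eq_of_card_fiber_eq {α : Type*} [LinearOrder α] {n : ℕ} {f f' : Fin n → α}
    (hf : Monotone f) (hf' : Monotone f') (h : ∀ a, #{u | f u = a} = #{u | f' u = a}) :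
    f = f' :=
  hf.eq_of_coe_ofFn_eq hf' <| Multiset.ext.2 fun a => by simp only [Fin.count_coe_ofFn, h]

section BlockShift

variable {n k : ℕ} (B : ℕ)

def blockShift (h : Fin n → Fin k) (u : Fin n) : Fin (k + n / B) :=
  ⟨h u + u / B, by
    have := Nat.div_le_div_right (c := B) u.2.le
    omega⟩

variable {B}

theorem monotone_blockShift {h : Fin n → Fin k} (hh : Monotone h) : Monotone (blockShift B h) :=
  fun _ _ huv => Fin.mk_le_mk.2 <| Nat.add_le_add (hh huv) (Nat.div_le_div_right huv)

theorem blockShift_injective : Function.Injective (blockShift B : (Fin n → Fin k) → _) := by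
  intro h h' hh
  funext u
  have := congrArg Fin.val (congrFun hh u)
  simp only [blockShift] at this
  exact Fin.ext (by omega)

theorem card_fiber_blockShift_le (hB : 0 < B) {h : Fin n → Fin k} (hh : Monotone h)
    (i : Fin (k + n / B)) : #{u | blockShift B h u = i} ≤ B := by
  have same_block : ∀ u v, blockShift B h u = blockShift B h v → (u : ℕ) / B = v / B := by
    intro u v huv
    have := congrArg Fin.val huv
    simp only [blockShift] at this
    rcases le_total u v with huv' | huv' <;>
      have := hh huv' <;> have := Nat.div_le_div_right (c := B) huv' <;> omega
  calc #{u | blockShift B h u = i} ≤ #(range B) := by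
        refine card_le_card_of_injOn (fun u => (u : ℕ) % B) (fun u _ => ?_) ?_
        · simpa using Nat.mod_lt _ hB
        · intro u hu v hv huv
          simp only [coe_filter, mem_univ, true_and, Set.mem_ofPred_eq] at hu hv
          simp only at huv
          exact Fin.ext (by
            rw [← Nat.div_add_mod u B, ← Nat.div_add_mod v B, same_block u v (hu.trans hv.symm),
              huv])
    _ = B := card_range B

end BlockShift

theorem card_sym_le_card_boundedCompositions {k n B : ℕ} (hB : 0 < B) :
    Nat.card (Sym (Fin k) n) ≤
      Nat.card {a : Fin (k + n / B) → ℕ // (∀ i, a i ≤ B) ∧ ∑ i, a i = n} := by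
  have : Finite {a : Fin (k + n / B) → ℕ // (∀ i, a i ≤ B) ∧ ∑ i, a i = n} :=
    Finite.of_injective (fun a i => (⟨a.1 i, Nat.lt_succ_of_le (a.2.1 i)⟩ : Fin (B + 1)))
      fun a b hab => Subtype.ext <| funext fun i => congrArg Fin.val (congrFun hab i)
  let compositionOf (s : Sym (Fin k) n) :
      {a : Fin (k + n / B) → ℕ // (∀ i, a i ≤ B) ∧ ∑ i, a i = n} :=
    ⟨fun i => #{u | blockShift B s.sortedFn u = i},
      card_fiber_blockShift_le hB s.monotone_sortedFn,
      by rw [← card_eq_sum_card_fiberwise (fun _ _ => mem_univ _), card_univ, Fintype.card_fin]⟩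
  refine Nat.card_le_card_of_injective compositionOf fun s t hst => ?_
  apply Sym.sortedFn_injective
  apply blockShift_injective (B := B)
  exact (monotone_blockShift s.monotone_sortedFn).eq_of_card_fiber_eq
    (monotone_blockShift t.monotone_sortedFn) fun i => congrFun (congrArg Subtype.val hst) i

theorem ordered_partitions_bounded_parts_lower_bound_general (N g B : ℕ) (hB : 0 < B)
    (hg : N / B + 1 ≤ g) :
    Nat.choose (N - 2 * (N / B) + g - 1) (g - N / B - 1) ≤
      Nat.card {a : Fin g → ℕ // (∀ i, a i ≤ B) ∧ ∑ i, a i = N} := by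
  obtain ⟨k, rfl⟩ : ∃ k, g = k + N / B := ⟨g - N / B, by omega⟩
  calc Nat.choose (N - 2 * (N / B) + (k + N / B) - 1) (k + N / B - N / B - 1)
      ≤ (k + N - 1).choose (k - 1) := by
        rw [Nat.add_sub_cancel]
        exact Nat.choose_le_choose _ (by have := Nat.div_le_self N B; omega)
    _ = (k + N - 1).choose N := Nat.choose_symm_of_eq_add (by omega)
    _ = Nat.card (Sym (Fin k) N) := by rw [Sym.natCard_sym_eq_choose, Nat.card_fin]
    _ ≤ _ := card_sym_le_card_boundedCompositions hB

/-- The number of ordered partitions of `N` into `g` parts from `[0,B]` is at least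
`C(N - 2g' + g - 1, g - g' - 1)` where `g' = ⌊N/B⌋`. -/
theorem ordered_partitions_bounded_parts_lower_bound (N g B : ℕ) (hB : 0 < B)
    (hg : N / B + 1 ≤ g) (hN : 2 * (N / B) ≤ N) :
    Nat.choose (N - 2 * (N / B) + g - 1) (g - N / B - 1) ≤
      Nat.card {a : Fin g → ℕ // (∀ i, a i ≤ B) ∧ ∑ i, a i = N} :=
  ordered_partitions_bounded_parts_lower_bound_general N g B hB hg
end

section
/- Let A[1..n] be an array of distinct values and fix k ≥ 1. For j ∈ [1,n] define S_k(j,ℓ) = min(k, |{ℓ' : ℓ < ℓ' ≤ j and A[ℓ'] > A[ℓ]}|) for ℓ ∈ [1,j]. Call index ℓ active in S_k(j) if S_k(j,ℓ) < k. Then the relative order (by A-value) of the active indices of S_k(j) is uniquely determined by the function ℓ ↦ S_k(j,ℓ): specifically, for any active index ℓ, S_k(j,ℓ) equals the number of active indices ℓ' > ℓ with A[ℓ'] > A[ℓ]. -/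
open Finset

/-- `Sk k A j ℓ` is the number of indices `ℓ'` with `ℓ < ℓ' ≤ j` and `A ℓ' > A ℓ`,
capped at `k`. -/
def Sk {n : ℕ} (k : ℕ) (A : Fin n → ℤ) (j ℓ : Fin n) : ℕ :=
  min k (Finset.univ.filter (fun ℓ' : Fin n => ℓ < ℓ' ∧ ℓ' ≤ j ∧ A ℓ < A ℓ')).card

/-- For an active index `ℓ` of `S_k(j)`, the value `S_k(j,ℓ)` equals the number of
*active* indices `ℓ' ∈ (ℓ, j]` with `A ℓ' > A ℓ`; hence the relative order of the active
indices is determined by `S_k(j)`. -/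
theorem Sk_active_count {n k : ℕ} (A : Fin n → ℤ) (hA : Function.Injective A)
    (j ℓ : Fin n) (hℓj : ℓ ≤ j) (hact : Sk k A j ℓ < k) :
    Sk k A j ℓ =
      (Finset.univ.filter (fun ℓ' : Fin n =>
        ℓ < ℓ' ∧ ℓ' ≤ j ∧ A ℓ < A ℓ' ∧ Sk k A j ℓ' < k)).card := by
  have hcard : (Finset.univ.filter (fun ℓ' : Fin n =>
      ℓ < ℓ' ∧ ℓ' ≤ j ∧ A ℓ < A ℓ')).card < k := by
    by_contra h
    push_neg at h
    simp [Sk, Nat.min_eq_left h] at hact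
  have hSk : Sk k A j ℓ = (Finset.univ.filter (fun ℓ' : Fin n =>
      ℓ < ℓ' ∧ ℓ' ≤ j ∧ A ℓ < A ℓ')).card := by
    simp [Sk, Nat.min_eq_right hcard.le]
  rw [hSk]
  congr 1
  apply Finset.filter_congr
  intro x _
  constructor
  · rintro ⟨h1, h2, h3⟩
    refine ⟨h1, h2, h3, ?_⟩
    have hsub : (Finset.univ.filter (fun ℓ' : Fin n =>
        x < ℓ' ∧ ℓ' ≤ j ∧ A x < A ℓ')) ⊆ (Finset.univ.filter (fun ℓ' : Fin n =>
        ℓ < ℓ' ∧ ℓ' ≤ j ∧ A ℓ < A ℓ')) := by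
      intro y hy
      simp only [Finset.mem_filter, Finset.mem_univ, true_and] at hy ⊢
      exact ⟨h1.trans hy.1, hy.2.1, h3.trans hy.2.2⟩
    calc Sk k A j x ≤ (Finset.univ.filter (fun ℓ' : Fin n =>
          x < ℓ' ∧ ℓ' ≤ j ∧ A x < A ℓ')).card := Nat.min_le_right _ _
      _ ≤ _ := Finset.card_le_card hsub
      _ < k := hcard
  · rintro ⟨h1, h2, h3, _⟩
    exact ⟨h1, h2, h3⟩
end

section
/- With A and S_k as defined, for any active index ℓ in S_k(j) and any inactive index ℓ' with ℓ < ℓ' ≤ j, it is impossible that A[ℓ] < A[ℓ'] while fewer than k active indices in (ℓ, j] exceed A[ℓ]. Equivalently: if ℓ is active in S_k(j) then every index ℓ'' ∈ (ℓ, j] with A[ℓ''] > A[ℓ] is also active in S_k(j). -/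
open Finset

/-- If `ℓ` is active in `S_k(j)`, then every index `ℓ'' ∈ (ℓ, j]` with
`A ℓ'' > A ℓ` is also active in `S_k(j)`. -/
theorem Sk_active_of_larger {n k : ℕ} (A : Fin n → ℤ) (hA : Function.Injective A)
    (j ℓ : Fin n) (hℓj : ℓ ≤ j) (hact : Sk k A j ℓ < k)
    (ℓ'' : Fin n) (h1 : ℓ < ℓ'') (h2 : ℓ'' ≤ j) (h3 : A ℓ < A ℓ'') :
    Sk k A j ℓ'' < k := by
  unfold Sk at *
  have hcardℓ : (Finset.univ.filter (fun ℓ' : Fin n => ℓ < ℓ' ∧ ℓ' ≤ j ∧ A ℓ < A ℓ')).card < k := by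
    omega
  have hsub : insert ℓ'' (Finset.univ.filter (fun ℓ' : Fin n => ℓ'' < ℓ' ∧ ℓ' ≤ j ∧ A ℓ'' < A ℓ'))
      ⊆ Finset.univ.filter (fun ℓ' : Fin n => ℓ < ℓ' ∧ ℓ' ≤ j ∧ A ℓ < A ℓ') := by
    intro x hx
    simp only [mem_insert, mem_filter, mem_univ, true_and] at hx ⊢
    rcases hx with rfl | ⟨ha, hb, hc⟩
    · exact ⟨h1, h2, h3⟩
    · exact ⟨h1.trans ha, hb, h3.trans hc⟩
  have hnot : ℓ'' ∉ Finset.univ.filter (fun ℓ' : Fin n => ℓ'' < ℓ' ∧ ℓ' ≤ j ∧ A ℓ'' < A ℓ') := by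
    simp
  have := Finset.card_le_card hsub
  rw [Finset.card_insert_of_notMem hnot] at this
  omega
end

section
/- With A and S_k as defined, define |S_k(j)| = Σ_{ℓ=1}^{j} (k − S_k(j,ℓ)) and δ_j = |S_k(j)| − |S_k(j+1)| + k for j ∈ [1, n−1]. Then 0 ≤ δ_j ≤ k + (number of active indices in S_k(j)), and moreover δ_j equals the number of active indices ℓ ≤ j in S_k(j) with A[ℓ] < A[j+1]. -/
/-!
Passing from `j` to `j' = j + 1`, the uncapped count of an index `ℓ ≤ j` grows by one exactly
when `A ℓ < A j'`, so `S_k(j', ℓ)` exceeds `S_k(j, ℓ)` by one exactly when `ℓ` is active in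
`S_k(j)` and `A ℓ < A j'`; the new index `j'` has `S_k(j', j') = 0` and contributes `k`.
Summing, `δ_j` counts the incremented indices, a subset of the active ones.
-/

open Finset

section CovBy

variable {α : Type*} [LinearOrder α] [Fintype α] {j j' : α}

theorem CovBy.filter_le_eq_insert (h : j ⋖ j') :
    univ.filter (· ≤ j') = insert j' (univ.filter (· ≤ j)) := by
  ext x
  simp [le_iff_lt_or_eq, h.lt_iff_le_left, or_comm]

theorem CovBy.sum_filter_le {M : Type*} [AddCommMonoid M] (h : j ⋖ j') (f : α → M) :
    ∑ x ∈ univ.filter (· ≤ j'), f x = f j' + ∑ x ∈ univ.filter (· ≤ j), f x := by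
  rw [h.filter_le_eq_insert, sum_insert (by simpa using h.lt)]

theorem CovBy.card_filter_Ioc (h : j ⋖ j') {ℓ : α} (hℓ : ℓ < j') (p : α → Prop)
    [DecidablePred p] :
    #{x | ℓ < x ∧ x ≤ j' ∧ p x} = #{x | ℓ < x ∧ x ≤ j ∧ p x} + if p j' then 1 else 0 := by
  have filter_le_filter (i : α) :
      #{x | ℓ < x ∧ x ≤ i ∧ p x} = #{x ∈ univ.filter (· ≤ i) | ℓ < x ∧ p x} := by
    rw [filter_filter]
    simp only [and_left_comm]
  rw [filter_le_filter, filter_le_filter, h.filter_le_eq_insert, filter_insert]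
  split_ifs <;> simp_all [card_insert_of_notMem, h.lt.not_ge]

end CovBy

section Sk

variable {n k : ℕ} (A : Fin n → ℤ) {j j' : Fin n}

theorem Sk_self (j : Fin n) : Sk k A j j = 0 := by
  rw [Sk, filter_false_of_mem fun x _ hx => hx.2.1.not_gt hx.1]
  simp

theorem Sk_of_covBy (h : j ⋖ j') {ℓ : Fin n} (hℓ : ℓ ≤ j) :
    Sk k A j' ℓ = Sk k A j ℓ + if Sk k A j ℓ < k ∧ A ℓ < A j' then 1 else 0 := by
  unfold Sk
  rw [h.card_filter_Ioc (hℓ.trans_lt h.lt)]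
  split_ifs <;> omega

def Sk.size (k : ℕ) (A : Fin n → ℤ) (j : Fin n) : ℤ :=
  ∑ ℓ ∈ univ.filter (· ≤ j), ((k : ℤ) - Sk k A j ℓ)

theorem Sk.size_sub_size_add_eq_card_of_covBy (h : j ⋖ j') :
    Sk.size k A j - Sk.size k A j' + k = #{ℓ | ℓ ≤ j ∧ Sk k A j ℓ < k ∧ A ℓ < A j'} := by
  have increment : ∀ ℓ ∈ univ.filter (· ≤ j), ((k : ℤ) - Sk k A j ℓ) - (k - Sk k A j' ℓ)
      = if Sk k A j ℓ < k ∧ A ℓ < A j' then 1 else 0 := by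
    intro ℓ hℓ
    rw [Sk_of_covBy A h (by simpa using hℓ)]
    split_ifs <;> push_cast <;> ring
  rw [Sk.size, Sk.size, h.sum_filter_le, Sk_self, ← filter_filter, ← sum_boole,
    ← sum_congr rfl increment]
  simp only [sum_sub_distrib]
  push_cast
  ring

end Sk

theorem delta_eq_incremented_count_general {n k : ℕ} (A : Fin n → ℤ)
    (j j' : Fin n) (hj' : (j' : ℕ) = (j : ℕ) + 1) :
    0 ≤ (∑ ℓ ∈ Finset.univ.filter (fun ℓ : Fin n => ℓ ≤ j), ((k : ℤ) - Sk k A j ℓ)) -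
        (∑ ℓ ∈ Finset.univ.filter (fun ℓ : Fin n => ℓ ≤ j'), ((k : ℤ) - Sk k A j' ℓ)) + k ∧
    (∑ ℓ ∈ Finset.univ.filter (fun ℓ : Fin n => ℓ ≤ j), ((k : ℤ) - Sk k A j ℓ)) -
        (∑ ℓ ∈ Finset.univ.filter (fun ℓ : Fin n => ℓ ≤ j'), ((k : ℤ) - Sk k A j' ℓ)) + k ≤
      (k : ℤ) + (Finset.univ.filter (fun ℓ : Fin n => ℓ ≤ j ∧ Sk k A j ℓ < k)).card ∧
    (∑ ℓ ∈ Finset.univ.filter (fun ℓ : Fin n => ℓ ≤ j), ((k : ℤ) - Sk k A j ℓ)) -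
        (∑ ℓ ∈ Finset.univ.filter (fun ℓ : Fin n => ℓ ≤ j'), ((k : ℤ) - Sk k A j' ℓ)) + k =
      ((Finset.univ.filter (fun ℓ : Fin n =>
        ℓ ≤ j ∧ Sk k A j ℓ < k ∧ A ℓ < A j')).card : ℤ) := by
  have hcov : j ⋖ j' := Fin.covBy_iff.2 (Nat.covBy_iff_add_one_eq.2 hj'.symm)
  have hδ := Sk.size_sub_size_add_eq_card_of_covBy (k := k) A hcov
  have incremented_le_active :
      #{ℓ | ℓ ≤ j ∧ Sk k A j ℓ < k ∧ A ℓ < A j'} ≤ #{ℓ | ℓ ≤ j ∧ Sk k A j ℓ < k} :=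
    card_le_card (monotone_filter_right _ fun _ _ => And.imp_right And.left)
  simp only [Sk.size] at hδ
  refine ⟨hδ ▸ Int.natCast_nonneg _, ?_, hδ⟩
  rw [hδ]
  omega

/-- With `|S_k(j)| = Σ_{ℓ ≤ j} (k − S_k(j,ℓ))` and `δ_j = |S_k(j)| − |S_k(j+1)| + k`,
we have `0 ≤ δ_j ≤ k + #active(j)`, and `δ_j` equals the number of active indices
`ℓ ≤ j` with `A ℓ < A (j+1)`. -/
theorem delta_eq_incremented_count {n k : ℕ} (A : Fin n → ℤ) (hA : Function.Injective A)
    (j j' : Fin n) (hj' : (j' : ℕ) = (j : ℕ) + 1) :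
    0 ≤ (∑ ℓ ∈ Finset.univ.filter (fun ℓ : Fin n => ℓ ≤ j), ((k : ℤ) - Sk k A j ℓ)) -
        (∑ ℓ ∈ Finset.univ.filter (fun ℓ : Fin n => ℓ ≤ j'), ((k : ℤ) - Sk k A j' ℓ)) + k ∧
    (∑ ℓ ∈ Finset.univ.filter (fun ℓ : Fin n => ℓ ≤ j), ((k : ℤ) - Sk k A j ℓ)) -
        (∑ ℓ ∈ Finset.univ.filter (fun ℓ : Fin n => ℓ ≤ j'), ((k : ℤ) - Sk k A j' ℓ)) + k ≤
      (k : ℤ) + (Finset.univ.filter (fun ℓ : Fin n => ℓ ≤ j ∧ Sk k A j ℓ < k)).card ∧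
    (∑ ℓ ∈ Finset.univ.filter (fun ℓ : Fin n => ℓ ≤ j), ((k : ℤ) - Sk k A j ℓ)) -
        (∑ ℓ ∈ Finset.univ.filter (fun ℓ : Fin n => ℓ ≤ j'), ((k : ℤ) - Sk k A j' ℓ)) + k =
      ((Finset.univ.filter (fun ℓ : Fin n =>
        ℓ ≤ j ∧ Sk k A j ℓ < k ∧ A ℓ < A j')).card : ℤ) :=
  delta_eq_incremented_count_general A j j' hj'
end

section
/- With A and S_k as defined, S_k(j+1) is determined by S_k(j) and δ_j: namely, S_k(j+1,ℓ) = S_k(j,ℓ) + 1 if ℓ is among the δ_j active indices of S_k(j) holding the smallest A-values, S_k(j+1,ℓ) = S_k(j,ℓ) otherwise for ℓ ≤ j, and S_k(j+1,j+1) = 0. Consequently, the sequence (δ_1, ..., δ_{n-1}) together with n and k determines S_k(j) for every j ∈ [1,n]. -/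
open Finset

lemma cnt_succ {n : ℕ} (A : Fin n → ℤ) (j j' : Fin n) (h : (j' : ℕ) = (j : ℕ) + 1)
    (ℓ : Fin n) (hℓ : ℓ ≤ j) :
    (Finset.univ.filter (fun ℓ' : Fin n => ℓ < ℓ' ∧ ℓ' ≤ j' ∧ A ℓ < A ℓ')).card
      = (Finset.univ.filter (fun ℓ' : Fin n => ℓ < ℓ' ∧ ℓ' ≤ j ∧ A ℓ < A ℓ')).card
        + (if A ℓ < A j' then 1 else 0) := by
  have hℓv := Fin.le_def.mp hℓ
  by_cases hA : A ℓ < A j'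
  · rw [if_pos hA]
    have hset : (Finset.univ.filter (fun ℓ' : Fin n => ℓ < ℓ' ∧ ℓ' ≤ j' ∧ A ℓ < A ℓ'))
        = insert j' (Finset.univ.filter (fun ℓ' : Fin n => ℓ < ℓ' ∧ ℓ' ≤ j ∧ A ℓ < A ℓ')) := by
      ext ℓ'
      simp only [mem_insert, mem_filter, mem_univ, true_and]
      constructor
      · rintro ⟨h1, h2, h3⟩
        by_cases he : ℓ' = j'
        · exact Or.inl he
        · refine Or.inr ⟨h1, ?_, h3⟩
          have hv : (ℓ' : ℕ) ≠ (j' : ℕ) := fun hv => he (Fin.ext hv)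
          have h2' : (ℓ' : ℕ) ≤ (j' : ℕ) := h2
          exact Fin.le_def.mpr (by omega)
      · rintro (he | ⟨h1, h2, h3⟩)
        · subst he
          exact ⟨Fin.lt_def.mpr (by omega), le_refl _, hA⟩
        · exact ⟨h1, Fin.le_def.mpr (by have := Fin.le_def.mp h2; omega), h3⟩
    rw [hset, card_insert_of_notMem]
    simp only [mem_filter, mem_univ, true_and, not_and]
    intro _ h2
    have := Fin.le_def.mp h2; omega
  · rw [if_neg hA, Nat.add_zero]
    congr 1
    ext ℓ'
    simp only [mem_filter, mem_univ, true_and]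
    constructor
    · rintro ⟨h1, h2, h3⟩
      refine ⟨h1, ?_, h3⟩
      have h2' := Fin.le_def.mp h2
      have hne : ℓ' ≠ j' := fun he => hA (he ▸ h3)
      have hv : (ℓ' : ℕ) ≠ (j' : ℕ) := fun hv => hne (Fin.ext hv)
      exact Fin.le_def.mpr (by omega)
    · rintro ⟨h1, h2, h3⟩
      exact ⟨h1, Fin.le_def.mpr (by have := Fin.le_def.mp h2; omega), h3⟩

lemma Sk_succ {n k : ℕ} (A : Fin n → ℤ) (j j' : Fin n) (h : (j' : ℕ) = (j : ℕ) + 1)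
    (ℓ : Fin n) (hℓ : ℓ ≤ j) :
    Sk k A j' ℓ = Sk k A j ℓ + (if Sk k A j ℓ < k ∧ A ℓ < A j' then 1 else 0) := by
  unfold Sk
  rw [cnt_succ A j j' h ℓ hℓ]
  set c := (Finset.univ.filter (fun ℓ' : Fin n => ℓ < ℓ' ∧ ℓ' ≤ j ∧ A ℓ < A ℓ')).card with hc
  have hmin : (min k c < k) ↔ c < k := by omega
  by_cases hA : A ℓ < A j'
  · rw [if_pos hA]
    by_cases hkc : c < k
    · rw [if_pos ⟨hmin.mpr hkc, hA⟩]; omega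
    · rw [if_neg (fun hcc => hkc (hmin.mp hcc.1))]; omega
  · rw [if_neg hA, if_neg (fun hcc => hA hcc.2)]; omega

lemma Sk_diag {n k : ℕ} (A : Fin n → ℤ) (j : Fin n) : Sk k A j j = 0 := by
  have h : (Finset.univ.filter (fun ℓ' : Fin n => j < ℓ' ∧ ℓ' ≤ j ∧ A j < A ℓ')) = ∅ := by
    rw [Finset.eq_empty_iff_forall_notMem]
    intro ℓ' hm
    rw [mem_filter] at hm
    exact absurd (lt_of_lt_of_le hm.2.1 hm.2.2.1) (lt_irrefl j)
  rw [Sk, h]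
  simp

lemma step_lemma {n k : ℕ} (A A' : Fin n → ℤ) (hA : Function.Injective A)
    (hA' : Function.Injective A') (j j' : Fin n) (hjj' : (j' : ℕ) = (j : ℕ) + 1)
    (hδ : (univ.filter (fun ℓ : Fin n => ℓ ≤ j ∧ Sk k A j ℓ < k ∧ A ℓ < A j')).card =
          (univ.filter (fun ℓ : Fin n => ℓ ≤ j ∧ Sk k A' j ℓ < k ∧ A' ℓ < A' j')).card)
    (IH1 : ∀ ℓ, ℓ ≤ j → Sk k A j ℓ = Sk k A' j ℓ)
    (IH2 : ∀ ℓ1 ℓ2, ℓ1 ≤ j → ℓ2 ≤ j → Sk k A j ℓ1 < k → Sk k A j ℓ2 < k →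
      (A ℓ1 < A ℓ2 ↔ A' ℓ1 < A' ℓ2)) :
    (∀ ℓ, ℓ ≤ j' → Sk k A j' ℓ = Sk k A' j' ℓ) ∧
    (∀ ℓ1 ℓ2, ℓ1 ≤ j' → ℓ2 ≤ j' → Sk k A j' ℓ1 < k → Sk k A j' ℓ2 < k →
      (A ℓ1 < A ℓ2 ↔ A' ℓ1 < A' ℓ2)) := by
  set D := univ.filter (fun ℓ : Fin n => ℓ ≤ j ∧ Sk k A j ℓ < k ∧ A ℓ < A j') with hD
  set D' := univ.filter (fun ℓ : Fin n => ℓ ≤ j ∧ Sk k A' j ℓ < k ∧ A' ℓ < A' j') with hD'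
  have hmemD : ∀ x : Fin n, x ∈ D ↔ (x ≤ j ∧ Sk k A j x < k ∧ A x < A j') := by
    intro x; rw [hD, mem_filter]; simp
  have hmemD' : ∀ x : Fin n, x ∈ D' ↔ (x ≤ j ∧ Sk k A' j x < k ∧ A' x < A' j') := by
    intro x; rw [hD', mem_filter]; simp
  -- basic facts
  have hne : ∀ ℓ : Fin n, ℓ ≤ j → ℓ ≠ j' := by
    intro ℓ hℓ he
    have h1 := Fin.le_def.mp hℓ
    have h2 : (ℓ : ℕ) = (j' : ℕ) := by rw [he]
    omega
  have hflip : ∀ ℓ : Fin n, ℓ ≤ j → ¬ A ℓ < A j' → A j' < A ℓ := by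
    intro ℓ hℓ hn
    exact lt_of_le_of_ne (not_lt.mp hn) (fun he => hne ℓ hℓ (hA he).symm)
  have hflip' : ∀ ℓ : Fin n, ℓ ≤ j → ¬ A' ℓ < A' j' → A' j' < A' ℓ := by
    intro ℓ hℓ hn
    exact lt_of_le_of_ne (not_lt.mp hn) (fun he => hne ℓ hℓ (hA' he).symm)
  -- D = D'
  have hsub1 : D ⊆ D' := by
    intro ℓ hℓD
    by_contra hℓD'
    obtain ⟨hℓj, hact, hlt⟩ := (hmemD ℓ).mp hℓD
    have hact' : Sk k A' j ℓ < k := by rw [← IH1 ℓ hℓj]; exact hact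
    have hgt' : A' j' < A' ℓ := by
      apply hflip' ℓ hℓj
      intro hcon
      exact hℓD' ((hmemD' ℓ).mpr ⟨hℓj, hact', hcon⟩)
    have hsub : D' ⊆ D.erase ℓ := by
      intro m hm
      obtain ⟨hmj, hmact', hmlt'⟩ := (hmemD' m).mp hm
      have hmact : Sk k A j m < k := by rw [IH1 m hmj]; exact hmact'
      have hmlℓ' : A' m < A' ℓ := lt_trans hmlt' hgt'
      have hmlℓ : A m < A ℓ := (IH2 m ℓ hmj hℓj hmact hact).mpr hmlℓ'
      refine Finset.mem_erase.mpr ⟨?_, (hmemD m).mpr ⟨hmj, hmact, lt_trans hmlℓ hlt⟩⟩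
      intro he; rw [he] at hmlℓ'; exact lt_irrefl _ hmlℓ'
    have h1 := Finset.card_le_card hsub
    rw [Finset.card_erase_of_mem hℓD] at h1
    have h2 := Finset.card_pos.mpr ⟨ℓ, hℓD⟩
    omega
  have hsub2 : D' ⊆ D := by
    intro ℓ hℓD'
    by_contra hℓD
    obtain ⟨hℓj, hact', hlt'⟩ := (hmemD' ℓ).mp hℓD'
    have hact : Sk k A j ℓ < k := by rw [IH1 ℓ hℓj]; exact hact'
    have hgt : A j' < A ℓ := by
      apply hflip ℓ hℓj
      intro hcon
      exact hℓD ((hmemD ℓ).mpr ⟨hℓj, hact, hcon⟩)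
    have hsub : D ⊆ D'.erase ℓ := by
      intro m hm
      obtain ⟨hmj, hmact, hmlt⟩ := (hmemD m).mp hm
      have hmact' : Sk k A' j m < k := by rw [← IH1 m hmj]; exact hmact
      have hmlℓ : A m < A ℓ := lt_trans hmlt hgt
      have hmlℓ' : A' m < A' ℓ := (IH2 m ℓ hmj hℓj hmact hact).mp hmlℓ
      refine Finset.mem_erase.mpr ⟨?_, (hmemD' m).mpr ⟨hmj, hmact', lt_trans hmlℓ' hlt'⟩⟩
      intro he; rw [he] at hmlℓ; exact lt_irrefl _ hmlℓ
    have h1 := Finset.card_le_card hsub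
    rw [Finset.card_erase_of_mem hℓD'] at h1
    have h2 := Finset.card_pos.mpr ⟨ℓ, hℓD'⟩
    omega
  have hDD' : D = D' := Finset.Subset.antisymm hsub1 hsub2
  -- membership iff
  have hiff : ∀ ℓ : Fin n, ℓ ≤ j →
      ((Sk k A j ℓ < k ∧ A ℓ < A j') ↔ (Sk k A' j ℓ < k ∧ A' ℓ < A' j')) := by
    intro ℓ hℓj
    constructor
    · intro ⟨h1, h2⟩
      have := hsub1 ((hmemD ℓ).mpr ⟨hℓj, h1, h2⟩)
      exact ((hmemD' ℓ).mp this).2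
    · intro ⟨h1, h2⟩
      have := hsub2 ((hmemD' ℓ).mpr ⟨hℓj, h1, h2⟩)
      exact ((hmemD ℓ).mp this).2
  have hsplit : ∀ ℓ : Fin n, ℓ ≤ j' → ℓ = j' ∨ ℓ ≤ j := by
    intro ℓ hℓ
    have h1 := Fin.le_def.mp hℓ
    by_cases he : (ℓ : ℕ) = (j' : ℕ)
    · exact Or.inl (Fin.ext he)
    · exact Or.inr (Fin.le_def.mpr (by omega))
  have key1 : ∀ ℓ, ℓ ≤ j' → Sk k A j' ℓ = Sk k A' j' ℓ := by
    intro ℓ hℓ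
    rcases hsplit ℓ hℓ with he | hℓj
    · subst he; rw [Sk_diag, Sk_diag]
    · rw [Sk_succ A j j' hjj' ℓ hℓj, Sk_succ A' j j' hjj' ℓ hℓj]
      by_cases hc : Sk k A j ℓ < k ∧ A ℓ < A j'
      · rw [if_pos hc, if_pos ((hiff ℓ hℓj).mp hc), IH1 ℓ hℓj]
      · rw [if_neg hc, if_neg (fun hcc => hc ((hiff ℓ hℓj).mpr hcc)), IH1 ℓ hℓj]
  refine ⟨key1, ?_⟩
  -- order agreement at j'
  have hactdown : ∀ ℓ, ℓ ≤ j → Sk k A j' ℓ < k → Sk k A j ℓ < k := by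
    intro ℓ hℓj hlt
    rw [Sk_succ A j j' hjj' ℓ hℓj] at hlt
    by_cases hc : Sk k A j ℓ < k ∧ A ℓ < A j'
    · exact hc.1
    · rw [if_neg hc] at hlt; omega
  intro ℓ1 ℓ2 h1 h2 ha1 ha2
  rcases hsplit ℓ1 h1 with he1 | h1j
  · rcases hsplit ℓ2 h2 with he2 | h2j
    · subst he1; subst he2
      constructor <;> (intro h; exact absurd h (lt_irrefl _))
    · -- ℓ1 = j', ℓ2 ≤ j
      subst he1
      have ha2' := hactdown ℓ2 h2j ha2
      constructor
      · intro hlt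
        have hn : ¬ A ℓ2 < A ℓ1 := not_lt.mpr (le_of_lt hlt)
        have : ¬ (Sk k A j ℓ2 < k ∧ A ℓ2 < A ℓ1) := fun hc => hn hc.2
        have hn' : ¬ A' ℓ2 < A' ℓ1 := by
          intro hc
          have := (hiff ℓ2 h2j).mpr ⟨by rw [← IH1 ℓ2 h2j]; exact ha2', hc⟩
          exact hn this.2
        exact hflip' ℓ2 h2j hn'
      · intro hlt
        have hn' : ¬ A' ℓ2 < A' ℓ1 := not_lt.mpr (le_of_lt hlt)
        have hn : ¬ A ℓ2 < A ℓ1 := by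
          intro hc
          have := (hiff ℓ2 h2j).mp ⟨ha2', hc⟩
          exact hn' this.2
        exact hflip ℓ2 h2j hn
  · rcases hsplit ℓ2 h2 with he2 | h2j
    · -- ℓ1 ≤ j, ℓ2 = j'
      subst he2
      have ha1' := hactdown ℓ1 h1j ha1
      constructor
      · intro hlt
        exact ((hiff ℓ1 h1j).mp ⟨ha1', hlt⟩).2
      · intro hlt
        exact ((hiff ℓ1 h1j).mpr ⟨by rw [← IH1 ℓ1 h1j]; exact ha1', hlt⟩).2
    · exact IH2 ℓ1 ℓ2 h1j h2j (hactdown ℓ1 h1j ha1) (hactdown ℓ2 h2j ha2)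

/-- `S_k(j+1)` is obtained from `S_k(j)` by incrementing the active indices whose
values are below `A (j+1)` (the `δ_j` smallest active values), keeping the rest, and
appending `0` at position `j+1`.  Consequently the sequence of `δ`'s determines all
structures: two arrays with the same `δ` sequences have identical `S_k` structures. -/
theorem Sk_update_and_determined {n k : ℕ} (A A' : Fin n → ℤ)
    (hA : Function.Injective A) (hA' : Function.Injective A') :
    (∀ j j' : Fin n, (j' : ℕ) = (j : ℕ) + 1 →
      (∀ ℓ : Fin n, ℓ ≤ j →
        ((Sk k A j ℓ < k ∧ A ℓ < A j') → Sk k A j' ℓ = Sk k A j ℓ + 1) ∧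
        (¬ (Sk k A j ℓ < k ∧ A ℓ < A j') → Sk k A j' ℓ = Sk k A j ℓ)) ∧
      Sk k A j' j' = 0) ∧
    ((∀ j j' : Fin n, (j' : ℕ) = (j : ℕ) + 1 →
        (Finset.univ.filter (fun ℓ : Fin n => ℓ ≤ j ∧ Sk k A j ℓ < k ∧ A ℓ < A j')).card =
        (Finset.univ.filter (fun ℓ : Fin n => ℓ ≤ j ∧ Sk k A' j ℓ < k ∧ A' ℓ < A' j')).card) →
      ∀ j ℓ : Fin n, ℓ ≤ j → Sk k A j ℓ = Sk k A' j ℓ) := by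
  constructor
  · intro j j' hjj'
    refine ⟨?_, Sk_diag A j'⟩
    intro ℓ hℓ
    constructor
    · intro hc; rw [Sk_succ A j j' hjj' ℓ hℓ, if_pos hc]
    · intro hc; rw [Sk_succ A j j' hjj' ℓ hℓ, if_neg hc, Nat.add_zero]
  · intro hyp
    have main : ∀ m : ℕ, ∀ j : Fin n, (j : ℕ) = m →
        ((∀ ℓ, ℓ ≤ j → Sk k A j ℓ = Sk k A' j ℓ) ∧
         (∀ ℓ1 ℓ2, ℓ1 ≤ j → ℓ2 ≤ j → Sk k A j ℓ1 < k → Sk k A j ℓ2 < k →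
           (A ℓ1 < A ℓ2 ↔ A' ℓ1 < A' ℓ2))) := by
      intro m
      induction m with
      | zero =>
        intro j hj
        have heq : ∀ ℓ : Fin n, ℓ ≤ j → ℓ = j := by
          intro ℓ hℓ
          have := Fin.le_def.mp hℓ
          exact Fin.ext (by omega)
        constructor
        · intro ℓ hℓ
          rw [heq ℓ hℓ, Sk_diag, Sk_diag]
        · intro ℓ1 ℓ2 h1 h2 _ _
          rw [heq ℓ1 h1, heq ℓ2 h2]
          constructor <;> (intro h; exact absurd h (lt_irrefl _))
      | succ m ih =>
        intro j' hj'
        have hm : m < n := by have := j'.isLt; omega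
        have hjj' : (j' : ℕ) = ((⟨m, hm⟩ : Fin n) : ℕ) + 1 := by simp [hj']
        exact step_lemma A A' hA hA' ⟨m, hm⟩ j' hjj' (hyp ⟨m, hm⟩ j' hjj')
          (ih ⟨m, hm⟩ rfl).1 (ih ⟨m, hm⟩ rfl).2
    intro j ℓ hℓ
    exact (main (j : ℕ) j rfl).1 ℓ hℓ
end

section
/- With A and S_k as defined, the answers to all range top-k queries on A are determined by the structures S_k(j), j ∈ [1,n]: for any query range [i,j], the ordered list of indices of the k largest values in A[i..j] equals the top-k (by A-value) of the active indices ℓ ∈ [i,j] of S_k(j), padded as needed, and this list (and the relative order among these indices) is computable from S_k(j) alone. -/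
open Finset

namespace TopkAux

variable {n k : ℕ}

/-- the set counted (uncapped) by `Sk`. -/
def big (B : Fin n → ℤ) (j ℓ : Fin n) : Finset (Fin n) :=
  Finset.univ.filter (fun ℓ' : Fin n => ℓ < ℓ' ∧ ℓ' ≤ j ∧ B ℓ < B ℓ')

lemma sk_def (B : Fin n → ℤ) (j ℓ : Fin n) : Sk k B j ℓ = min k (big B j ℓ).card := rfl

lemma mem_big {B : Fin n → ℤ} {j ℓ m : Fin n} :
    m ∈ big B j ℓ ↔ ℓ < m ∧ m ≤ j ∧ B ℓ < B m := by simp [big]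

lemma sk_lt_iff {B : Fin n → ℤ} {j ℓ : Fin n} : Sk k B j ℓ < k ↔ (big B j ℓ).card < k := by
  rw [sk_def]; omega

lemma sk_eq_of_lt {B : Fin n → ℤ} {j ℓ : Fin n} (h : Sk k B j ℓ < k) :
    Sk k B j ℓ = (big B j ℓ).card := by
  rw [sk_def] at *; omega

/-- core combinatorial lemma: a set of at least `k` elements contains at least `k`
elements each of which has fewer than `k` strictly larger elements in the set. -/
lemma core (B : Fin n → ℤ) (hB : Function.Injective B) (T : Finset (Fin n)) (hT : k ≤ T.card) :
    k ≤ (T.filter (fun m => (T.filter (fun t => B m < B t)).card < k)).card := by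
  set f : Fin n → ℕ := fun m => (T.filter (fun t => B m < B t)).card with hf
  have hmono : ∀ a ∈ T, ∀ b ∈ T, B a < B b → f b < f a := by
    intro a ha b hb hab
    apply Finset.card_lt_card
    refine ⟨fun t ht => ?_, fun hsub => ?_⟩
    · rw [Finset.mem_filter] at *
      exact ⟨ht.1, lt_trans hab ht.2⟩
    · have hb' : b ∈ T.filter (fun t => B a < B t) := by simp [ha, hb, hab]
      have := hsub hb'
      simp at this
  have hinj : Set.InjOn f T := by
    intro a ha b hb hfe
    by_contra hne
    have hBne : B a ≠ B b := fun h => hne (hB h)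
    rcases lt_or_gt_of_ne hBne with h | h
    · exact absurd hfe (hmono a ha b hb h).ne'
    · exact absurd hfe (hmono b hb a ha h).ne
  have hbound : ∀ m ∈ T, f m < T.card := by
    intro m hm
    apply Finset.card_lt_card
    refine ⟨Finset.filter_subset _ _, fun hsub => ?_⟩
    have := hsub hm
    simp at this
  have hbad : (T.filter (fun m => ¬ f m < k)).card ≤ T.card - k := by
    have himg : (T.filter (fun m => ¬ f m < k)).image f ⊆ Finset.Ico k T.card := by
      intro x hx
      simp only [Finset.mem_image, Finset.mem_filter] at hx
      obtain ⟨m, ⟨hmT, hmk⟩, rfl⟩ := hx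
      simp [Finset.mem_Ico]
      exact ⟨by omega, hbound m hmT⟩
    have hcard : ((T.filter (fun m => ¬ f m < k)).image f).card
        = (T.filter (fun m => ¬ f m < k)).card :=
      Finset.card_image_of_injOn (hinj.mono (by
        intro x hx; exact (Finset.mem_filter.mp hx).1))
    have := Finset.card_le_card himg
    rw [hcard] at this
    simpa using this
  have hsplit := Finset.card_filter_add_card_filter_not (s := T) (p := fun m => f m < k)
  have key : (T.filter (fun m => (T.filter (fun t => B m < B t)).card < k))
      = (T.filter (fun m => f m < k)) := rfl
  rw [key]
  omega

/-- an element counted by an active index is itself active, with strictly smaller count. -/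
lemma big_lt {B : Fin n → ℤ} {j ℓ1 ℓ' : Fin n} (h1 : ℓ1 < ℓ') (h2 : ℓ' ≤ j)
    (h3 : B ℓ1 < B ℓ') : (big B j ℓ').card < (big B j ℓ1).card := by
  apply Finset.card_lt_card
  refine ⟨fun m hm => ?_, fun hsub => ?_⟩
  · rw [mem_big] at *
    exact ⟨lt_trans h1 hm.1, hm.2.1, lt_trans h3 hm.2.2⟩
  · have : ℓ' ∈ big B j ℓ1 := mem_big.mpr ⟨h1, h2, h3⟩
    have := hsub this
    rw [mem_big] at this
    exact absurd this.1 (lt_irrefl _)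

lemma active_of_big {B : Fin n → ℤ} {j ℓ1 ℓ' : Fin n} (h1 : ℓ1 < ℓ') (h2 : ℓ' ≤ j)
    (h3 : B ℓ1 < B ℓ') (ha : Sk k B j ℓ1 < k) : Sk k B j ℓ' < k := by
  rw [sk_lt_iff] at *
  exact lt_trans (big_lt h1 h2 h3) ha

/-- comparison of two active indices is characterized by `Sk`-data. -/
lemma char (B : Fin n → ℤ) (hB : Function.Injective B) (j ℓ1 ℓ2 : Fin n)
    (h12 : ℓ1 < ℓ2) (h2j : ℓ2 ≤ j) (a1 : Sk k B j ℓ1 < k) (a2 : Sk k B j ℓ2 < k) :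
    (B ℓ1 < B ℓ2 ↔
      (Finset.univ.filter
          (fun ℓ' : Fin n => ℓ1 < ℓ' ∧ ℓ' ≤ j ∧ Sk k B j ℓ' < k ∧ ¬ B ℓ' < B ℓ2)).card
        ≤ Sk k B j ℓ1) := by
  set N := Finset.univ.filter
      (fun ℓ' : Fin n => ℓ1 < ℓ' ∧ ℓ' ≤ j ∧ Sk k B j ℓ' < k ∧ ¬ B ℓ' < B ℓ2) with hN
  rw [sk_eq_of_lt a1]
  constructor
  · intro hlt
    apply Finset.card_le_card
    intro m hm
    simp only [hN, Finset.mem_filter, Finset.mem_univ, true_and] at hm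
    exact mem_big.mpr ⟨hm.1, hm.2.1, lt_of_lt_of_le hlt (not_lt.mp hm.2.2.2)⟩
  · intro hle
    by_contra hlt
    have h21 : B ℓ2 < B ℓ1 :=
      lt_of_le_of_ne (not_lt.mp hlt) (fun h => (Fin.ne_of_lt h12) (hB h.symm))
    have hsub : big B j ℓ1 ⊆ N.erase ℓ2 := by
      intro m hm
      rw [mem_big] at hm
      rw [Finset.mem_erase]
      refine ⟨fun h => ?_, ?_⟩
      · subst h; exact absurd hm.2.2 (asymm h21)
      · simp only [hN, Finset.mem_filter, Finset.mem_univ, true_and]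
        exact ⟨hm.1, hm.2.1, active_of_big hm.1 hm.2.1 hm.2.2 a1,
          not_lt.mpr (le_of_lt (lt_trans h21 hm.2.2))⟩
    have hℓ2 : ℓ2 ∈ N := by
      simp only [hN, Finset.mem_filter, Finset.mem_univ, true_and]
      exact ⟨h12, h2j, a2, lt_irrefl _⟩
    have h1 := Finset.card_le_card hsub
    have h2 := Finset.card_erase_of_mem hℓ2
    have h3 : 1 ≤ N.card := Finset.card_pos.mpr ⟨ℓ2, hℓ2⟩
    omega

end TopkAux

namespace TopkAux

/-- Two arrays with the same `Sk`-structure order their active indices identically. -/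
lemma compare_eq {n k : ℕ} (A A' : Fin n → ℤ) (hA : Function.Injective A)
    (hA' : Function.Injective A')
    (hS : ∀ j ℓ : Fin n, ℓ ≤ j → Sk k A j ℓ = Sk k A' j ℓ) (j : Fin n) :
    ∀ ℓ1 ℓ2 : Fin n, ℓ1 < ℓ2 → ℓ2 ≤ j → Sk k A j ℓ1 < k → Sk k A j ℓ2 < k →
      (A ℓ1 < A ℓ2 ↔ A' ℓ1 < A' ℓ2) := by
  suffices H : ∀ d : ℕ, ∀ ℓ1 ℓ2 : Fin n, n - ℓ1.val ≤ d → ℓ1 < ℓ2 → ℓ2 ≤ j →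
      Sk k A j ℓ1 < k → Sk k A j ℓ2 < k → (A ℓ1 < A ℓ2 ↔ A' ℓ1 < A' ℓ2) by
    intro ℓ1 ℓ2 h1 h2 h3 h4
    exact H (n - ℓ1.val) ℓ1 ℓ2 le_rfl h1 h2 h3 h4
  intro d
  induction d with
  | zero =>
    intro ℓ1 ℓ2 hd
    exact absurd hd (by have := ℓ1.isLt; omega)
  | succ d ih =>
    intro ℓ1 ℓ2 hd h12 h2j a1 a2
    have h1j : ℓ1 ≤ j := le_of_lt (lt_of_lt_of_le h12 h2j)
    have a1' : Sk k A' j ℓ1 < k := by rw [← hS j ℓ1 h1j]; exact a1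
    have a2' : Sk k A' j ℓ2 < k := by rw [← hS j ℓ2 h2j]; exact a2
    rw [char A hA j ℓ1 ℓ2 h12 h2j a1 a2, char A' hA' j ℓ1 ℓ2 h12 h2j a1' a2']
    have hsets : (Finset.univ.filter
          (fun ℓ' : Fin n => ℓ1 < ℓ' ∧ ℓ' ≤ j ∧ Sk k A j ℓ' < k ∧ ¬ A ℓ' < A ℓ2))
        = (Finset.univ.filter
          (fun ℓ' : Fin n => ℓ1 < ℓ' ∧ ℓ' ≤ j ∧ Sk k A' j ℓ' < k ∧ ¬ A' ℓ' < A' ℓ2)) := by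
      apply Finset.filter_congr
      intro ℓ' _
      constructor
      all_goals
        rintro ⟨hx1, hx2, hx3, hx4⟩
      · refine ⟨hx1, hx2, by rw [← hS j ℓ' hx2]; exact hx3, ?_⟩
        -- compare ℓ' with ℓ2
        rcases lt_trichotomy ℓ' ℓ2 with hc | hc | hc
        · have hiff := ih ℓ' ℓ2 (by have := hx1; omega) hc h2j hx3 a2
          exact (not_congr hiff).mp hx4
        · subst hc; exact lt_irrefl _
        · have hiff := ih ℓ2 ℓ' (by have h12' := h12; omega) hc hx2 a2 hx3
          have h2' : A ℓ2 < A ℓ' := by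
            rcases lt_or_gt_of_ne (fun h : A ℓ2 = A ℓ' => (Fin.ne_of_lt hc) (hA h)) with h | h
            · exact h
            · exact absurd h hx4
          exact asymm (hiff.mp h2')
      · have hx3' : Sk k A j ℓ' < k := by rw [hS j ℓ' hx2]; exact hx3
        refine ⟨hx1, hx2, hx3', ?_⟩
        rcases lt_trichotomy ℓ' ℓ2 with hc | hc | hc
        · have hiff := ih ℓ' ℓ2 (by have := hx1; omega) hc h2j hx3' a2
          exact (not_congr hiff).mpr hx4
        · subst hc; exact lt_irrefl _
        · have hiff := ih ℓ2 ℓ' (by have h12' := h12; omega) hc hx2 a2 hx3'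
          have h2' : A' ℓ2 < A' ℓ' := by
            rcases lt_or_gt_of_ne (fun h : A' ℓ2 = A' ℓ' => (Fin.ne_of_lt hc) (hA' h)) with h | h
            · exact h
            · exact absurd h hx4
          exact asymm (hiff.mpr h2')
    rw [hsets, hS j ℓ1 h1j]

end TopkAux

namespace TopkAux

lemma dir {n k : ℕ} (A A' : Fin n → ℤ) (hA : Function.Injective A)
    (hA' : Function.Injective A')
    (hS : ∀ j ℓ : Fin n, ℓ ≤ j → Sk k A j ℓ = Sk k A' j ℓ)
    (i j ℓ : Fin n) (hi : i ≤ ℓ) (hj : ℓ ≤ j) (r : ℕ) (hr : r < k)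
    (h : ((Finset.Icc i j).filter (fun m => A ℓ < A m)).card = r) :
    ((Finset.Icc i j).filter (fun m => A' ℓ < A' m)).card = r := by
  have hcard : ((Finset.Icc i j).filter (fun m => A ℓ < A m)).card < k := by omega
  -- (a) ℓ is active
  have aℓ : Sk k A j ℓ < k := by
    rw [sk_lt_iff]
    refine lt_of_le_of_lt (Finset.card_le_card ?_) hcard
    intro m hm
    rw [mem_big] at hm
    exact Finset.mem_filter.mpr
      ⟨Finset.mem_Icc.mpr ⟨le_trans hi (le_of_lt hm.1), hm.2.1⟩, hm.2.2⟩
  -- (b) elements of the range larger than A ℓ are active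
  have hact : ∀ m ∈ Finset.Icc i j, A ℓ < A m → Sk k A j m < k := by
    intro m hm hlt
    rw [sk_lt_iff]
    refine lt_of_le_of_lt (Finset.card_le_card ?_) hcard
    intro x hx
    rw [mem_big] at hx
    refine Finset.mem_filter.mpr
      ⟨Finset.mem_Icc.mpr ⟨le_trans (Finset.mem_Icc.mp hm).1 (le_of_lt hx.1), hx.2.1⟩,
        lt_trans hlt hx.2.2⟩
  -- comparisons with active elements transfer
  have hcmp : ∀ m ∈ Finset.Icc i j, Sk k A j m < k → (A ℓ < A m ↔ A' ℓ < A' m) := by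
    intro m hm am
    rcases lt_trichotomy ℓ m with hc | hc | hc
    · exact compare_eq A A' hA hA' hS j ℓ m hc (Finset.mem_Icc.mp hm).2 aℓ am
    · subst hc; simp
    · have hiff := compare_eq A A' hA hA' hS j m ℓ hc hj am aℓ
      constructor
      · intro h'
        have h1 : ¬ A' m < A' ℓ := (not_congr hiff).mp (asymm h')
        exact lt_of_le_of_ne (not_lt.mp h1)
          (fun he => (Fin.ne_of_lt hc) (hA' he.symm))
      · intro h'
        have h1 : ¬ A m < A ℓ := (not_congr hiff).mpr (asymm h')
        exact lt_of_le_of_ne (not_lt.mp h1)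
          (fun he => (Fin.ne_of_lt hc) (hA he.symm))
  have E1 : (Finset.Icc i j).filter (fun m => A ℓ < A m)
      = (Finset.Icc i j).filter (fun m => Sk k A j m < k ∧ A' ℓ < A' m) := by
    ext m
    simp only [Finset.mem_filter]
    constructor
    · rintro ⟨hm, hlt⟩
      exact ⟨hm, hact m hm hlt, (hcmp m hm (hact m hm hlt)).mp hlt⟩
    · rintro ⟨hm, am, hlt'⟩
      exact ⟨hm, (hcmp m hm am).mpr hlt'⟩
  have E2 : (Finset.Icc i j).filter (fun m => A' ℓ < A' m)
      = (Finset.Icc i j).filter (fun m => Sk k A j m < k ∧ A' ℓ < A' m) := by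
    ext m
    simp only [Finset.mem_filter]
    constructor
    · rintro ⟨hm, hlt'⟩
      refine ⟨hm, ?_, hlt'⟩
      by_contra hna
      have hna' : ¬ Sk k A' j m < k := by
        rw [← hS j m (Finset.mem_Icc.mp hm).2]; exact hna
      have hBk : k ≤ (big A' j m).card := by
        rw [sk_lt_iff (k := k)] at hna'; omega
      have hcore := core (k := k) A' hA' (big A' j m) hBk
      have hsub : (big A' j m).filter
            (fun m' => ((big A' j m).filter (fun t => A' m' < A' t)).card < k)
          ⊆ (Finset.Icc i j).filter (fun m' => Sk k A j m' < k ∧ A' ℓ < A' m') := by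
        intro x hx
        rw [Finset.mem_filter] at hx
        obtain ⟨hxB, hxc⟩ := hx
        rw [mem_big] at hxB
        have hxj : x ≤ j := hxB.2.1
        have hxIcc : x ∈ Finset.Icc i j := Finset.mem_Icc.mpr
          ⟨le_trans (Finset.mem_Icc.mp hm).1 (le_of_lt hxB.1), hxj⟩
        have hxact' : Sk k A' j x < k := by
          rw [sk_lt_iff]
          refine lt_of_le_of_lt (Finset.card_le_card ?_) hxc
          intro y hy
          rw [mem_big] at hy
          rw [Finset.mem_filter, mem_big]
          exact ⟨⟨lt_trans hxB.1 hy.1, hy.2.1, lt_trans hxB.2.2 hy.2.2⟩, hy.2.2⟩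
        have hxact : Sk k A j x < k := by rw [hS j x hxj]; exact hxact'
        exact Finset.mem_filter.mpr ⟨hxIcc, hxact, lt_trans hlt' hxB.2.2⟩
      have hle := le_trans hcore (Finset.card_le_card hsub)
      rw [← E1, h] at hle
      omega
    · rintro ⟨hm, _, hlt'⟩
      exact ⟨hm, hlt'⟩
  rw [E2, ← E1, h]

end TopkAux


open TopkAux in
/-- The answers to all range top-`k` queries are determined by the structures `S_k(j)`:
an index `ℓ ∈ [i,j]` is in the top-`k` of `A[i..j]` iff it is active in `S_k(j)` and
fewer than `k` active indices of `[i,j]` hold larger values; and two arrays with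
identical `S_k` structures have identical ordered top-`k` answers on every range. -/
theorem topk_determined_by_Sk {n k : ℕ} (A A' : Fin n → ℤ)
    (hA : Function.Injective A) (hA' : Function.Injective A') :
    (∀ i j ℓ : Fin n, i ≤ ℓ → ℓ ≤ j →
      (((Finset.Icc i j).filter (fun m => A ℓ < A m)).card < k ↔
        (Sk k A j ℓ < k ∧
          ((Finset.Icc i j).filter (fun m => Sk k A j m < k ∧ A ℓ < A m)).card < k))) ∧
    ((∀ j ℓ : Fin n, ℓ ≤ j → Sk k A j ℓ = Sk k A' j ℓ) →
      ∀ i j ℓ : Fin n, i ≤ ℓ → ℓ ≤ j → ∀ r : ℕ, r < k →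
        (((Finset.Icc i j).filter (fun m => A ℓ < A m)).card = r ↔
          ((Finset.Icc i j).filter (fun m => A' ℓ < A' m)).card = r)) := by
  constructor
  · intro i j ℓ hi hj
    constructor
    · intro hlt
      constructor
      · rw [sk_lt_iff]
        refine lt_of_le_of_lt (Finset.card_le_card ?_) hlt
        intro m hm
        rw [mem_big] at hm
        exact Finset.mem_filter.mpr
          ⟨Finset.mem_Icc.mpr ⟨le_trans hi (le_of_lt hm.1), hm.2.1⟩, hm.2.2⟩
      · refine lt_of_le_of_lt (Finset.card_le_card ?_) hlt
        intro m hm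
        rw [Finset.mem_filter] at *
        exact ⟨hm.1, hm.2.2⟩
    · rintro ⟨-, h2⟩
      by_contra hge
      push_neg at hge
      have hcore := core (k := k) A hA _ hge
      have hsub : ((Finset.Icc i j).filter (fun m => A ℓ < A m)).filter
            (fun m' => (((Finset.Icc i j).filter (fun m => A ℓ < A m)).filter
              (fun t => A m' < A t)).card < k)
          ⊆ (Finset.Icc i j).filter (fun m => Sk k A j m < k ∧ A ℓ < A m) := by
        intro x hx
        rw [Finset.mem_filter, Finset.mem_filter] at hx
        obtain ⟨⟨hxI, hxA⟩, hxc⟩ := hx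
        have hxact : Sk k A j x < k := by
          rw [sk_lt_iff]
          refine lt_of_le_of_lt (Finset.card_le_card ?_) hxc
          intro y hy
          rw [mem_big] at hy
          rw [Finset.mem_filter, Finset.mem_filter]
          exact ⟨⟨Finset.mem_Icc.mpr
            ⟨le_trans (Finset.mem_Icc.mp hxI).1 (le_of_lt hy.1), hy.2.1⟩,
              lt_trans hxA hy.2.2⟩, hy.2.2⟩
        exact Finset.mem_filter.mpr ⟨hxI, hxact, hxA⟩
      have := le_trans hcore (Finset.card_le_card hsub)
      omega
  · intro hS i j ℓ hi hj r hr
    have hS' : ∀ j ℓ : Fin n, ℓ ≤ j → Sk k A' j ℓ = Sk k A j ℓ :=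
      fun j ℓ h => (hS j ℓ h).symm
    exact ⟨dir A A' hA hA' hS i j ℓ hi hj r hr,
      dir A' A hA' hA hS' i j ℓ hi hj r hr⟩
end

section
/- For a sequence of walk steps starting at height 0 where step i adds a_i ∈ [k − ⌈y_i/k⌉, k] to the current height y_i (so heights stay defined), any walk whose first Δ steps all equal k and which thereafter never goes below height kΔ satisfies: every later step a_i with a_i ∈ [k−Δ, k] automatically satisfies a_i ∈ [k − ⌈y_i/k⌉, k]. Hence the number of walks of length n−1 obeying the constraint a_i ∈ [k − ⌈y_i/k⌉, k] is at least the number of [k−Δ, k]-restricted walks of length n−1−Δ that never go below 0. -/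
/-!
Prepending `Δ` steps of size `k` lifts a nonnegative walk to height at least `kΔ`, and at
such a height `⌈y/k⌉ ≥ Δ`, so every step in `[k−Δ, k]` meets the ceiling constraint. The
lifting is injective, and the constrained walks of fixed length are finitely many because
their heights after `i` steps are at most `ki`, which keeps each step above `k − i`.
-/

open Finset

-- A walk of length `L` is encoded by its step sequence, which vanishes from index `L` on.
def IsCeilWalk (k L : ℕ) (a : ℕ → ℤ) : Prop :=
  (∀ i < L,
      (k : ℤ) - ⌈((∑ t ∈ range i, a t : ℤ) : ℚ) / (k : ℚ)⌉ ≤ a i ∧ a i ≤ k) ∧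
    ∀ i, L ≤ i → a i = 0

def IsRestrictedNonnegWalk (lo hi : ℤ) (m : ℕ) (a : ℕ → ℤ) : Prop :=
  (∀ i < m, lo ≤ a i ∧ a i ≤ hi) ∧ (∀ i, m ≤ i → a i = 0) ∧
    ∀ j ≤ m, 0 ≤ ∑ t ∈ range j, a t

section CeilDiv

variable {k : ℕ} (hk : 0 < k) {y d : ℤ}
include hk

lemma le_ceil_div_of_mul_le (h : k * d ≤ y) : d ≤ ⌈(y : ℚ) / k⌉ := by
  have hdiv : (d : ℚ) ≤ y / k := by
    rw [le_div_iff₀ (by exact_mod_cast hk)]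
    exact_mod_cast (by linarith : d * k ≤ y)
  exact_mod_cast hdiv.trans (Int.le_ceil _)

lemma ceil_div_le_of_le_mul (h : y ≤ k * d) : ⌈(y : ℚ) / k⌉ ≤ d := by
  rw [Int.ceil_le, div_le_iff₀ (by exact_mod_cast hk)]
  exact_mod_cast (by linarith : y ≤ d * k)

lemma sub_ceil_div_le_of_mul_le {Δ : ℕ} {s : ℤ} (hy : k * Δ ≤ y) (hs : k - Δ ≤ s) :
    k - ⌈(y : ℚ) / k⌉ ≤ s := by
  linarith [le_ceil_div_of_mul_le hk hy]

end CeilDiv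

lemma Set.finite_setOf_Icc_and_eq_zero (N : ℕ) (lo hi : ℤ) :
    {a : ℕ → ℤ | (∀ i < N, a i ∈ Set.Icc lo hi) ∧ ∀ i, N ≤ i → a i = 0}.Finite := by
  refine Set.Finite.of_finite_image (f := fun a (i : Fin N) => a i) ?_ ?_
  · refine (Set.Finite.pi fun _ => Set.finite_Icc lo hi).subset ?_
    rintro _ ⟨a, ha, rfl⟩ i -
    exact ha.1 i i.2
  · intro a ha b hb hab
    funext i
    rcases lt_or_ge i N with hi | hi
    · exact congrFun hab ⟨i, hi⟩
    · rw [ha.2 i hi, hb.2 i hi]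

namespace IsCeilWalk

variable {k L : ℕ} {a : ℕ → ℤ}

lemma sub_le_apply (hk : 0 < k) (ha : IsCeilWalk k L a) {i : ℕ} (hi : i < L) :
    (k : ℤ) - i ≤ a i := by
  have hheight : ∑ t ∈ range i, a t ≤ k * i := by
    calc ∑ t ∈ range i, a t ≤ #(range i) • (k : ℤ) :=
          sum_le_card_nsmul _ _ _ fun t ht => (ha.1 t ((mem_range.1 ht).trans hi)).2
      _ = k * i := by rw [card_range, nsmul_eq_mul, mul_comm]
  linarith [(ha.1 i hi).1, ceil_div_le_of_le_mul hk hheight]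

lemma finite (hk : 0 < k) : Finite {a // IsCeilWalk k L a} :=
  Set.Finite.to_subtype <| (Set.finite_setOf_Icc_and_eq_zero L ((k : ℤ) - L) k).subset
    fun _ ha => ⟨fun i hi => ⟨by linarith [sub_le_apply hk ha hi], (ha.1 i hi).2⟩, ha.2⟩

end IsCeilWalk

def prependSteps (k Δ L : ℕ) (a : ℕ → ℤ) (i : ℕ) : ℤ :=
  if i < L then if i < Δ then k else a (i - Δ) else 0

section PrependSteps

variable {k Δ L i j : ℕ} {a : ℕ → ℤ}

lemma prependSteps_of_lt (hiL : i < L) (hiΔ : i < Δ) : prependSteps k Δ L a i = k := by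
  simp only [prependSteps, if_pos hiL, if_pos hiΔ]

lemma prependSteps_add (h : Δ + j < L) : prependSteps k Δ L a (Δ + j) = a j := by
  simp only [prependSteps, if_pos h, if_neg (Nat.not_lt.2 (Nat.le_add_right Δ j)),
    Nat.add_sub_cancel_left]

lemma prependSteps_of_le (hi : L ≤ i) : prependSteps k Δ L a i = 0 := by
  simp only [prependSteps, if_neg (Nat.not_lt.2 hi)]

lemma sum_range_prependSteps_add (h : Δ + j ≤ L) :
    ∑ t ∈ range (Δ + j), prependSteps k Δ L a t = k * Δ + ∑ t ∈ range j, a t := by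
  have hclimb : ∀ t ∈ range Δ, prependSteps k Δ L a t = k := fun t ht =>
    prependSteps_of_lt (by have := mem_range.1 ht; omega) (mem_range.1 ht)
  have hshift : ∀ t ∈ range j, prependSteps k Δ L a (Δ + t) = a t := fun t ht =>
    prependSteps_add (by have := mem_range.1 ht; omega)
  rw [sum_range_add, sum_congr rfl hclimb, sum_congr rfl hshift, sum_const, card_range,
    nsmul_eq_mul, mul_comm]

lemma isCeilWalk_prependSteps (hk : 0 < k)
    (ha : IsRestrictedNonnegWalk ((k : ℤ) - Δ) k (L - Δ) a) :
    IsCeilWalk k L (prependSteps k Δ L a) := by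
  refine ⟨fun i hiL => ?_, fun i hi => prependSteps_of_le hi⟩
  rcases lt_or_ge i Δ with hiΔ | hiΔ
  · have hheight : (k : ℤ) * 0 ≤ ∑ t ∈ range i, prependSteps k Δ L a t := by
      rw [mul_zero]
      exact sum_nonneg fun t ht => by
        rw [prependSteps_of_lt ((mem_range.1 ht).trans hiL) ((mem_range.1 ht).trans hiΔ)]
        positivity
    rw [prependSteps_of_lt hiL hiΔ]
    exact ⟨sub_le_self _ (le_ceil_div_of_mul_le hk hheight), le_rfl⟩
  · obtain ⟨j, rfl⟩ := Nat.exists_eq_add_of_le hiΔ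
    have hj : j < L - Δ := by omega
    have hheight : (k : ℤ) * Δ ≤ ∑ t ∈ range (Δ + j), prependSteps k Δ L a t := by
      rw [sum_range_prependSteps_add hiL.le]
      linarith [ha.2.2 j hj.le]
    rw [prependSteps_add hiL]
    exact ⟨sub_ceil_div_le_of_mul_le hk hheight (ha.1 j hj).1, (ha.1 j hj).2⟩

lemma prependSteps_injOn :
    Set.InjOn (prependSteps k Δ L) {a | ∀ i, L - Δ ≤ i → a i = 0} := by
  intro a ha b hb hab
  funext j
  rcases lt_or_ge j (L - Δ) with hj | hj
  · have hjL : Δ + j < L := by omega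
    rw [← prependSteps_add (k := k) (a := a) hjL, hab, prependSteps_add hjL]
  · rw [ha j hj, hb j hj]

end PrependSteps

theorem card_restrictedNonnegWalks_le_card_ceilWalks {k : ℕ} (hk : 0 < k) (Δ L : ℕ) :
    Nat.card {a // IsRestrictedNonnegWalk ((k : ℤ) - Δ) k (L - Δ) a} ≤
      Nat.card {a // IsCeilWalk k L a} :=
  have := IsCeilWalk.finite (L := L) hk
  Nat.card_le_card_of_injective
    (fun a => ⟨prependSteps k Δ L a, isCeilWalk_prependSteps hk a.2⟩)
    fun a b hab => Subtype.ext <| prependSteps_injOn a.2.2.1 b.2.2.1 (congrArg Subtype.val hab)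

theorem constrained_walks_lower_bound_general (k Δ n : ℕ) (hk : 1 ≤ k) :
    (∀ (N : ℕ) (a : ℕ → ℤ), (∀ i < Δ, a i = (k : ℤ)) →
      (∀ i, Δ ≤ i → i ≤ N → (k : ℤ) * Δ ≤ ∑ t ∈ Finset.range i, a t) →
      ∀ i, Δ ≤ i → i < N → (k : ℤ) - Δ ≤ a i → a i ≤ k →
        (k : ℤ) - ⌈((∑ t ∈ Finset.range i, a t : ℤ) : ℚ) / (k : ℚ)⌉ ≤ a i ∧
          a i ≤ (k : ℤ)) ∧
    Nat.card {a : ℕ → ℤ //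
        (∀ i < n - 1 - Δ, (k : ℤ) - Δ ≤ a i ∧ a i ≤ k) ∧
        (∀ i, n - 1 - Δ ≤ i → a i = 0) ∧
        (∀ m ≤ n - 1 - Δ, 0 ≤ ∑ t ∈ Finset.range m, a t)} ≤
      Nat.card {a : ℕ → ℤ //
        (∀ i < n - 1,
          (k : ℤ) - ⌈((∑ t ∈ Finset.range i, a t : ℤ) : ℚ) / (k : ℚ)⌉ ≤ a i ∧
            a i ≤ (k : ℤ)) ∧
        (∀ i, n - 1 ≤ i → a i = 0)} :=
  ⟨fun _ _ _ hheight i hiΔ hiN hlo hhi =>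
    ⟨sub_ceil_div_le_of_mul_le hk (hheight i hiΔ hiN.le) hlo, hhi⟩,
   card_restrictedNonnegWalks_le_card_ceilWalks hk Δ (n - 1)⟩

/-- (1) If the first `Δ` steps of a walk all equal `k` and thereafter the height never
drops below `kΔ`, then every later step lying in `[k−Δ, k]` automatically satisfies the
constraint `a i ∈ [k − ⌈y_i/k⌉, k]` (where `y_i` is the height before step `i`).
(2) Hence the number of walks of length `n−1` obeying the constraint
`a i ∈ [k − ⌈y_i/k⌉, k]` is at least the number of `[k−Δ,k]`-restricted nonnegative
walks of length `n−1−Δ`. -/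
theorem constrained_walks_lower_bound (k Δ n : ℕ) (hk : 1 ≤ k) (hΔ : 1 ≤ Δ)
    (hn : Δ + 1 ≤ n) :
    (∀ (N : ℕ) (a : ℕ → ℤ), (∀ i < Δ, a i = (k : ℤ)) →
      (∀ i, Δ ≤ i → i ≤ N → (k : ℤ) * Δ ≤ ∑ t ∈ Finset.range i, a t) →
      ∀ i, Δ ≤ i → i < N → (k : ℤ) - Δ ≤ a i → a i ≤ k →
        (k : ℤ) - ⌈((∑ t ∈ Finset.range i, a t : ℤ) : ℚ) / (k : ℚ)⌉ ≤ a i ∧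
          a i ≤ (k : ℤ)) ∧
    Nat.card {a : ℕ → ℤ //
        (∀ i < n - 1 - Δ, (k : ℤ) - Δ ≤ a i ∧ a i ≤ k) ∧
        (∀ i, n - 1 - Δ ≤ i → a i = 0) ∧
        (∀ m ≤ n - 1 - Δ, 0 ≤ ∑ t ∈ Finset.range m, a t)} ≤
      Nat.card {a : ℕ → ℤ //
        (∀ i < n - 1,
          (k : ℤ) - ⌈((∑ t ∈ Finset.range i, a t : ℤ) : ℚ) / (k : ℚ)⌉ ≤ a i ∧
            a i ≤ (k : ℤ)) ∧
        (∀ i, n - 1 ≤ i → a i = 0)} :=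
  constrained_walks_lower_bound_general k Δ n hk
end
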